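/- arXiv:2206.00231 — 3 statements merged into one kernel-verified Lean document; each statement's English description precedes it below -/
import Mathlib

section
/- Minimizing over all slope vectors recovers exactness: min over κ ∈ [0,1]ᴺ of min{cᵀx : (x,s,t) ∈ C(κ)} equals min{cᵀx : (x,s,t) ∈ C}, where C uses the positive-part constraints (gᵢ(x))⁺ ≥ t − sᵢ and C(κ) uses κᵢ·gᵢ(x) ≥ t − sᵢ, with gᵢ(x) = (b − Aᵀx)ᵀξ̂ᵢ + b₀ − aᵀx. (The optimal κ can be chosen as the indicator κᵢ = 1 if gᵢ(x) ≥ 0, else κᵢ = 0.) -/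
open Finset

/-- Feasible set `C(κ)` of the inner linearization with slope vector `κ`. -/
def ICCfeasK {E : Type*} [NormedAddCommGroup E] [NormedSpace ℝ E] {L N : ℕ}
    (ξ : Fin N → E) (A : (Fin L → ℝ) →ₗ[ℝ] (E →L[ℝ] ℝ)) (a : Fin L → ℝ)
    (b : E →L[ℝ] ℝ) (b₀ ε θ : ℝ) (X : Set (Fin L → ℝ)) (κ : Fin N → ℝ)
    (p : (Fin L → ℝ) × (Fin N → ℝ) × ℝ) : Prop :=
  p.1 ∈ X ∧ (∀ i, 0 ≤ p.2.1 i) ∧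
    ε * N * p.2.2 - ∑ i, p.2.1 i ≥ θ * N * ‖b - A p.1‖ ∧
    ∀ i, κ i * ((b - A p.1) (ξ i) + b₀ - ∑ l, a l * p.1 l) ≥ p.2.2 - p.2.1 i

/-- Feasible set `C` with the positive-part constraints. -/
def ICCfeas {E : Type*} [NormedAddCommGroup E] [NormedSpace ℝ E] {L N : ℕ}
    (ξ : Fin N → E) (A : (Fin L → ℝ) →ₗ[ℝ] (E →L[ℝ] ℝ)) (a : Fin L → ℝ)
    (b : E →L[ℝ] ℝ) (b₀ ε θ : ℝ) (X : Set (Fin L → ℝ))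
    (p : (Fin L → ℝ) × (Fin N → ℝ) × ℝ) : Prop :=
  p.1 ∈ X ∧ (∀ i, 0 ≤ p.2.1 i) ∧
    ε * N * p.2.2 - ∑ i, p.2.1 i ≥ θ * N * ‖b - A p.1‖ ∧
    ∀ i, max ((b - A p.1) (ξ i) + b₀ - ∑ l, a l * p.1 l) 0 ≥ p.2.2 - p.2.1 i

/-- Minimizing over all slope vectors `κ ∈ [0,1]^N` recovers the exact optimal value. -/
theorem min_over_slopes_exact {E : Type*} [NormedAddCommGroup E] [NormedSpace ℝ E]
    {L N : ℕ} (ξ : Fin N → E) (A : (Fin L → ℝ) →ₗ[ℝ] (E →L[ℝ] ℝ))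
    (a : Fin L → ℝ) (b : E →L[ℝ] ℝ) (b₀ : ℝ)
    (ε θ : ℝ) (hε : ε ∈ Set.Ioo (0 : ℝ) 1) (hθ : 0 < θ)
    (X : Set (Fin L → ℝ)) (c : Fin L → ℝ) :
    (⨅ κ : {κ : Fin N → ℝ // ∀ i, κ i ∈ Set.Icc (0 : ℝ) 1},
        ⨅ p : {p : (Fin L → ℝ) × (Fin N → ℝ) × ℝ // ICCfeasK ξ A a b b₀ ε θ X κ.1 p},
          ((∑ l, c l * p.1.1 l : ℝ) : EReal))
      = ⨅ p : {p : (Fin L → ℝ) × (Fin N → ℝ) × ℝ // ICCfeas ξ A a b b₀ ε θ X p},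
          ((∑ l, c l * p.1.1 l : ℝ) : EReal) := by
  apply le_antisymm
  · apply le_iInf
    rintro ⟨⟨x, s, t⟩, hx, hs, hn, hg⟩
    set g : Fin N → ℝ := fun i => (b - A x) (ξ i) + b₀ - ∑ l, a l * x l with hgdef
    set κ : Fin N → ℝ := fun i => if 0 ≤ g i then 1 else 0 with hκdef
    have hκ : ∀ i, κ i ∈ Set.Icc (0 : ℝ) 1 := by
      intro i; simp only [hκdef]; split <;> norm_num
    refine iInf_le_of_le ⟨κ, hκ⟩ ?_
    refine iInf_le_of_le ⟨(x, s, t), ⟨hx, hs, hn, ?_⟩⟩ le_rfl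
    intro i
    have h := hg i
    simp only [hκdef]
    split
    · next hpos =>
        rw [max_eq_left hpos] at h
        simp only [hgdef] at h
        linarith
    · next hneg =>
        push_neg at hneg
        rw [max_eq_right hneg.le] at h
        linarith
  · apply le_iInf
    rintro ⟨κ, hκ⟩
    apply le_iInf
    rintro ⟨⟨x, s, t⟩, hx, hs, hn, hg⟩
    refine iInf_le_of_le ⟨(x, s, t), ⟨hx, hs, hn, ?_⟩⟩ le_rfl
    intro i
    have h := hg i
    have hκi := hκ i
    refine le_trans h ?_
    rcases le_or_gt 0 ((b - A x) (ξ i) + b₀ - ∑ l, a l * x l) with hpos | hneg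
    · calc κ i * _ ≤ 1 * ((b - A x) (ξ i) + b₀ - ∑ l, a l * x l) :=
            mul_le_mul_of_nonneg_right hκi.2 hpos
        _ = _ := one_mul _
        _ ≤ _ := le_max_left _ _
    · calc κ i * ((b - A x) (ξ i) + b₀ - ∑ l, a l * x l) ≤ 0 :=
            mul_nonpos_of_nonneg_of_nonpos hκi.1 hneg.le
        _ ≤ _ := le_max_right _ _
end

section
/- Worst-case CVaR constraint equivalence via partial sums: for fixed reals h₁,…,h_N (interpreted as hᵢ = sgn-dist(ξ̂ᵢ, complement of safety set)), the condition ∃ t ∈ ℝ, s ∈ ℝ₊ᴺ with εNt − ∑ᵢ sᵢ ≥ θN and hᵢ ≥ t − sᵢ for all i, holds if and only if (1/N)·∑ᵢ₌₁^{εN} h_{π(i)} ≥ θ, where π sorts h into nondecreasing order and the fractional partial sum convention ∑ᵢ₌₁^{ℓ} kᵢ = ∑ᵢ₌₁^{⌊ℓ⌋} kᵢ + (ℓ−⌊ℓ⌋)k_{⌊ℓ⌋+1} is used. -/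
open Finset

/-- Worst-case CVaR constraint equivalence via fractional partial sums of the sorted values. -/
theorem cvar_constraint_partial_sum (N : ℕ) (hN : 0 < N) (ε θ : ℝ)
    (hε : ε ∈ Set.Ioo (0 : ℝ) 1) (hεN : ε * N < N)
    (h : Fin N → ℝ) (π : Equiv.Perm (Fin N)) (hπ : Monotone (fun i => h (π i)))
    (m : ℕ) (hm : m = ⌊ε * N⌋₊) (hmN : m < N) :
    (∃ (t : ℝ) (s : Fin N → ℝ), (∀ i, 0 ≤ s i) ∧
        ε * N * t - ∑ i, s i ≥ θ * N ∧ ∀ i, h i ≥ t - s i)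
      ↔ (1 / N) * (∑ i ∈ Finset.univ.filter (fun i : Fin N => (i : ℕ) < m), h (π i)
            + (ε * N - m) * h (π ⟨m, hmN⟩)) ≥ θ := by
  have hN' : (0 : ℝ) < (N : ℝ) := by exact_mod_cast hN
  set F : Finset (Fin N) := Finset.univ.filter (fun i : Fin N => (i : ℕ) < m) with hF
  set c : ℝ := ε * N - m with hcdef
  set gm : ℝ := h (π ⟨m, hmN⟩) with hgm
  set S : ℝ := ∑ i ∈ F, h (π i) with hS
  have hεN0 : 0 ≤ ε * N := by
    have := hε.1.le
    positivity
  have hc0 : 0 ≤ c := by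
    have := Nat.floor_le hεN0
    rw [hcdef, hm]; linarith
  have hc1 : c ≤ 1 := by
    have := Nat.lt_floor_add_one (ε * N)
    rw [hcdef, hm]; push_cast; linarith
  have hcard : F.card = m := by
    have : F = Finset.Iio (⟨m, hmN⟩ : Fin N) := by
      ext i; simp [hF, Fin.lt_def]
    rw [this, Fin.card_Iio]
  have hmemF : ∀ i ∈ F, h (π i) ≤ gm := by
    intro i hi
    have hi' : (i : ℕ) < m := by simpa [hF] using hi
    exact hπ (by exact_mod_cast (Fin.le_def.mpr (le_of_lt hi')))
  -- key equivalence of RHS : (1/N)*(S + c*gm) ≥ θ ↔ S + c*gm ≥ θ*N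
  have hRHS : ((1 / (N:ℝ)) * (S + c * gm) ≥ θ) ↔ (S + c * gm ≥ θ * N) := by
    rw [ge_iff_le, ge_iff_le, one_div, inv_mul_eq_div, le_div_iff₀ hN']
  rw [hRHS]
  constructor
  · rintro ⟨t, s, hs0, hsum, hfeas⟩
    have hsum' : ∑ i, s (π i) = ∑ i, s i := Equiv.sum_comp π s
    have hsplit : ∑ i, s (π i) = ∑ i ∈ F, s (π i) + ∑ i ∈ Finset.univ.filter (fun i : Fin N => ¬ (i : ℕ) < m), s (π i) := by
      rw [hF, Finset.sum_filter_add_sum_filter_not]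
    have h1 : ∑ i ∈ F, (t - h (π i)) ≤ ∑ i ∈ F, s (π i) := by
      apply Finset.sum_le_sum
      intro i _
      have := hfeas (π i); linarith
    have hmem : (⟨m, hmN⟩ : Fin N) ∈ Finset.univ.filter (fun i : Fin N => ¬ (i : ℕ) < m) := by
      simp
    have h2 : s (π ⟨m, hmN⟩) ≤ ∑ i ∈ Finset.univ.filter (fun i : Fin N => ¬ (i : ℕ) < m), s (π i) :=
      Finset.single_le_sum (fun i _ => hs0 (π i)) hmem
    have h3 : c * (t - gm) ≤ s (π ⟨m, hmN⟩) := by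
      rcases le_or_gt (t - gm) 0 with hle | hlt
      · have : c * (t - gm) ≤ 0 := mul_nonpos_of_nonneg_of_nonpos hc0 hle
        exact this.trans (hs0 _)
      · have hfm := hfeas (π ⟨m, hmN⟩)
        have : c * (t - gm) ≤ 1 * (t - gm) := mul_le_mul_of_nonneg_right hc1 hlt.le
        rw [hgm] at *; nlinarith
    have h4 : ∑ i ∈ F, (t - h (π i)) = m * t - S := by
      rw [Finset.sum_sub_distrib, Finset.sum_const, hcard, nsmul_eq_mul, hS]
    have h5 : (m : ℝ) * t - S + c * (t - gm) ≤ ∑ i, s i := by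
      rw [← hsum', hsplit]; linarith
    rw [ge_iff_le] at hsum ⊢
    have h6 : ε * N * t = ((m : ℝ) + c) * t := by rw [hcdef]; ring
    linarith [hsum, h5]
  · intro hrhs
    refine ⟨gm, fun i => max (gm - h i) 0, fun i => le_max_right _ _, ?_, ?_⟩
    · have hval : ∀ i, max (gm - h (π i)) 0 = if (i : ℕ) < m then gm - h (π i) else 0 := by
        intro i
        split_ifs with hi
        · exact max_eq_left (by have := hmemF i (by simp [hF, hi]); linarith)
        · apply max_eq_right
          have : gm ≤ h (π i) := hπ (Fin.le_def.mpr (show (⟨m, hmN⟩ : Fin N).val ≤ i.val by simpa using not_lt.mp hi))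
          linarith
      have hsum2 : ∑ i, max (gm - h i) 0 = ∑ i, max (gm - h (π i)) 0 :=
        (Equiv.sum_comp π (fun i => max (gm - h i) 0)).symm
      have hsum3 : ∑ i, max (gm - h (π i)) 0 = ∑ i ∈ F, (gm - h (π i)) := by
        rw [Finset.sum_congr rfl (fun i _ => hval i), Finset.sum_ite, Finset.sum_const_zero,
          add_zero]
      have h4 : ∑ i ∈ F, (gm - h (π i)) = m * gm - S := by
        rw [Finset.sum_sub_distrib, Finset.sum_const, hcard, nsmul_eq_mul, hS]
      rw [ge_iff_le, hsum2, hsum3, h4]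
      have h6 : ε * N * gm = ((m : ℝ) + c) * gm := by rw [hcdef]; ring
      linarith [hrhs]
    · intro i
      have : gm - h i ≤ max (gm - h i) 0 := le_max_left _ _
      linarith
end

section
/- Separating a convex set from the region above a positive-part function: let W ⊆ ℝ² be convex with W ∩ V = ∅ where V = {(g, d) ∈ ℝ² : (g)⁺ < d}, and suppose additionally (0,0) is in the closure of W ∪ {(0,0)}. Then there exists κ ∈ [0,1] such that every (g,d) ∈ W satisfies κ·g ≥ d. -/
/-- A convex set disjoint from the region above the positive-part function, whose hull with
the origin still contains the origin in its closure, can be separated by a line `d = κ·g`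
with slope `κ ∈ [0,1]`. -/
theorem separation_positive_part (W : Set (ℝ × ℝ)) (hW : Convex ℝ W)
    (hdisj : W ∩ {q : ℝ × ℝ | max q.1 0 < q.2} = ∅)
    (h0 : ((0 : ℝ), (0 : ℝ)) ∈ closure (W ∪ {((0 : ℝ), (0 : ℝ))})) :
    ∃ κ ∈ Set.Icc (0 : ℝ) 1, ∀ q ∈ W, κ * q.1 ≥ q.2 := by
  have hle : ∀ q ∈ W, q.2 ≤ max q.1 0 := by
    intro q hq
    by_contra h
    push_neg at h
    have : q ∈ W ∩ {q : ℝ × ℝ | max q.1 0 < q.2} := ⟨hq, h⟩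
    rw [hdisj] at this
    exact this
  by_cases hc : ∃ q ∈ W, 0 < q.1 ∧ 0 < q.2
  · obtain ⟨q₀, hq₀W, hq₀1, hq₀2⟩ := hc
    set S := {r : ℝ | ∃ q ∈ W, 0 < q.1 ∧ r = q.2 / q.1} with hSdef
    have hS0 : q₀.2 / q₀.1 ∈ S := ⟨q₀, hq₀W, hq₀1, rfl⟩
    have hSne : S.Nonempty := ⟨_, hS0⟩
    have hub : ∀ r ∈ S, r ≤ 1 := by
      rintro r ⟨q, hqW, hq1, rfl⟩
      rw [div_le_one hq1]
      have := hle q hqW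
      rw [max_eq_left hq1.le] at this
      exact this
    have hbdd : BddAbove S := ⟨1, hub⟩
    set κ := sSup S with hκdef
    have hκ1 : κ ≤ 1 := csSup_le hSne hub
    have hκ0 : 0 < κ := lt_of_lt_of_le (div_pos hq₀2 hq₀1) (le_csSup hbdd hS0)
    refine ⟨κ, ⟨hκ0.le, hκ1⟩, ?_⟩
    intro q hq
    rcases lt_trichotomy q.1 0 with hneg | hzero | hpos
    · by_contra h
      push_neg at h
      -- h : κ * q.1 < q.2
      have hε : (0:ℝ) < (q.2 - κ * q.1) / (-q.1) := by
        apply div_pos <;> linarith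
      set ε := (q.2 - κ * q.1) / (-q.1) with hεdef
      have hεq : ε * (-q.1) = q.2 - κ * q.1 := by
        rw [hεdef, div_mul_cancel₀ _ (by linarith : (-q.1) ≠ 0)]
      obtain ⟨r, hrS, hr⟩ := exists_lt_of_lt_csSup hSne (by linarith : κ - ε < κ)
      obtain ⟨p, hpW, hp1, rfl⟩ := hrS
      have hp2 : (κ - ε) * p.1 < p.2 := (lt_div_iff₀ hp1).mp hr
      have hD : 0 < p.1 - q.1 := by linarith
      set a := p.1 / (p.1 - q.1) with hadef
      set b := -q.1 / (p.1 - q.1) with hbdef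
      have ha : 0 ≤ a := by positivity
      have hb : 0 ≤ b := by
        apply div_nonneg _ hD.le; linarith
      have hab : a + b = 1 := by
        rw [hadef, hbdef]; field_simp; try ring
      have hz := hW hq hpW ha hb hab
      have hz1 : (a • q + b • p).1 = 0 := by
        simp only [Prod.fst_add, Prod.smul_fst, smul_eq_mul, hadef, hbdef]
        field_simp
        try ring
      have hz2 := hle _ hz
      rw [hz1] at hz2
      simp only [max_self] at hz2
      have hz2' : a * q.2 + b * p.2 ≤ 0 := by
        simpa [Prod.snd_add, Prod.smul_snd, smul_eq_mul] using hz2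
      have hkey : p.1 * q.2 + (-q.1) * p.2 ≤ 0 := by
        have := mul_le_mul_of_nonneg_left hz2' hD.le
        have ha' : (p.1 - q.1) * (a * q.2) = p.1 * q.2 := by
          rw [hadef]; field_simp; try ring
        have hb' : (p.1 - q.1) * (b * p.2) = (-q.1) * p.2 := by
          rw [hbdef]; field_simp; try ring
        nlinarith [ha', hb']
      -- q.1 * p.2 < q.1 * (κ - ε) * p.1 since q.1 < 0
      nlinarith [mul_lt_mul_of_neg_left hp2 hneg, hεq]
    · have := hle q hq
      rw [hzero] at this ⊢
      simp at this ⊢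
      linarith
    · have : q.2 / q.1 ≤ κ := le_csSup hbdd ⟨q, hq, hpos, rfl⟩
      rw [div_le_iff₀ hpos] at this
      linarith [this]
  · push_neg at hc
    refine ⟨0, ⟨le_refl 0, zero_le_one⟩, ?_⟩
    intro q hq
    rcases le_or_gt q.1 0 with h1 | h1
    · have := hle q hq
      rw [max_eq_right h1] at this
      simpa using this
    · have := hc q hq h1
      simpa using this
end
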